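/- Let r ≥ 2 be an integer. For all φ with 0 < φ < π/(r+1), one has (r+1)·cos(φ)²·sin((r−1)φ) > (r−1)·sin((r+1)φ)·cos(2φ)². -/

import Mathlib

/-!
The inequality is the product of two factor-wise comparisons. First,
`(r - 1) sin((r + 1)φ) < (r + 1) sin((r - 1)φ)`, because `sin t / t` is the slope of the chord of
the strictly concave sine from the origin, hence decreasing on `(0, π]`. Second,
`cos² 2φ < cos² φ`, because the difference is `sin 3φ · sin φ > 0` for `φ < π / 3`.
-/

open Real

lemma sin_div_lt_sin_div {x y : ℝ} (hx : 0 < x) (hxy : x < y) (hy : y ≤ π) :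
    sin y / y < sin x / x := by
  have hmem : ∀ {t}, 0 ≤ t → t ≤ π → t ∈ Set.Icc 0 π := fun h₀ h₁ => ⟨h₀, h₁⟩
  simpa only [sin_zero, sub_zero] using
    strictConcaveOn_sin_Icc.secant_strict_mono (hmem le_rfl pi_pos.le)
      (hmem hx.le (hxy.le.trans hy)) (hmem (hx.trans hxy).le hy) hx.ne' (hx.trans hxy).ne' hxy

lemma mul_sin_mul_lt_mul_sin_mul {a b φ : ℝ} (ha : 0 < a) (hab : a < b) (hφ : 0 < φ)
    (hbφ : b * φ ≤ π) : a * sin (b * φ) < b * sin (a * φ) := by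
  have h := sin_div_lt_sin_div (mul_pos ha hφ) (mul_lt_mul_of_pos_right hab hφ) hbφ
  rw [div_lt_div_iff₀ (mul_pos (ha.trans hab) hφ) (mul_pos ha hφ)] at h
  exact (mul_lt_mul_iff_left₀ hφ).1 (by linarith)

lemma cos_sq_sub_cos_sq (a b : ℝ) : cos a ^ 2 - cos b ^ 2 = sin (b + a) * sin (b - a) := by
  rw [sin_add, sin_sub]
  linear_combination cos b ^ 2 * sin_sq_add_cos_sq a - cos a ^ 2 * sin_sq_add_cos_sq b

lemma cos_two_mul_sq_lt_cos_sq {φ : ℝ} (h₀ : 0 < φ) (h₁ : φ < π / 3) :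
    cos (2 * φ) ^ 2 < cos φ ^ 2 := by
  have h := cos_sq_sub_cos_sq φ (2 * φ)
  rw [show 2 * φ + φ = 3 * φ by ring, show 2 * φ - φ = φ by ring] at h
  have h3 : 0 < sin (3 * φ) := sin_pos_of_pos_of_lt_pi (by linarith) (by linarith)
  have h1 : 0 < sin φ := sin_pos_of_pos_of_lt_pi h₀ (by linarith [pi_pos])
  linarith [mul_pos h3 h1]

/-- for `r ≥ 2` and `0 < φ < π/(r+1)`,
`(r+1)·cos(φ)²·sin((r−1)φ) > (r−1)·sin((r+1)φ)·cos(2φ)²`. -/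
theorem hessian_positivity (r : ℕ) (hr : 2 ≤ r) (φ : ℝ) (hφ0 : 0 < φ)
    (hφ1 : φ < π / (r + 1)) :
    ((r : ℝ) + 1) * Real.cos φ ^ 2 * Real.sin (((r : ℝ) - 1) * φ) >
      ((r : ℝ) - 1) * Real.sin (((r : ℝ) + 1) * φ) * Real.cos (2 * φ) ^ 2 := by
  have hr' : (2 : ℝ) ≤ r := by exact_mod_cast hr
  have hπ : ((r : ℝ) + 1) * φ < π := by rwa [lt_div_iff₀ (by positivity), mul_comm] at hφ1
  have hφ3 : φ < π / 3 := hφ1.trans_le <| div_le_div_of_nonneg_left pi_pos.le (by norm_num)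
    (by linarith)
  have hsin : ((r : ℝ) - 1) * sin ((r + 1) * φ) < (r + 1) * sin ((r - 1) * φ) :=
    mul_sin_mul_lt_mul_sin_mul (by linarith) (by linarith) hφ0 hπ.le
  have hsin_nonneg : 0 ≤ ((r : ℝ) - 1) * sin ((r + 1) * φ) :=
    mul_nonneg (by linarith) (sin_pos_of_pos_of_lt_pi (by positivity) hπ).le
  have hmul := mul_lt_mul'' hsin (cos_two_mul_sq_lt_cos_sq hφ0 hφ3) hsin_nonneg (sq_nonneg _)
  linarith
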